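/- arXiv:1712.09415 — 5 statements merged into one kernel-verified Lean document; each statement's English description precedes it below -/
import Mathlib

section
/- Let (g, ⟦·,·⟧) be a Lie algebra over a commutative ring K and let ▷ : g × g → g be a K-bilinear product. Define the torsion T(x,y) := x ▷ y − y ▷ x − ⟦x,y⟧, the curvature R(x,y)z := x ▷ (y ▷ z) − y ▷ (x ▷ z) − ⟦x,y⟧ ▷ z, and the covariant differential of the torsion ∇T(y,z;x) := x ▷ T(y,z) − T(y, x ▷ z) − T(x ▷ y, z). If R(x,y)z = 0 and ∇T(y,z;x) = 0 for all x, y, z in g (flatness and constant torsion), then (g, −T(·,·), ▷) is a post-Lie algebra: the bracket (x,y) ↦ −T(x,y) is bilinear, alternating and satisfies the Jacobi identity, and ▷ satisfies (PL1) x ▷ (−T(y,z)) = −T(x ▷ y, z) − T(y, x ▷ z) and (PL2) (−T(x,y)) ▷ z = a(x,y,z) − a(y,x,z), where a(x,y,z) := x ▷ (y ▷ z) − (x ▷ y) ▷ z. -/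
/-- **Theorem (flat connections with constant torsion give post-Lie algebras).**
Let `(g, ⟦·,·⟧)` be a Lie algebra over a commutative ring `K` (the bracket `⁅·,·⁆` below) and
let `▷` be a `K`-bilinear product on `g` (the bilinear map `t`). Define the torsion
`T(x,y) := x ▷ y − y ▷ x − ⟦x,y⟧`, the curvature
`R(x,y)z := x ▷ (y ▷ z) − y ▷ (x ▷ z) − ⟦x,y⟧ ▷ z`, and the covariant differential of the
torsion `∇T(y,z;x) := x ▷ T(y,z) − T(y, x ▷ z) − T(x ▷ y, z)`. If `R ≡ 0` and `∇T ≡ 0`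
(flatness and constant torsion), then `(g, −T(·,·), ▷)` is a post-Lie algebra: the bracket
`B := −T` is bilinear, alternating and satisfies the Jacobi identity, and `▷` satisfies the
post-Lie axioms (PL1) and (PL2) with respect to `B`. -/
theorem flat_constant_torsion_postLie {K : Type*} [CommRing K] {g : Type*} [LieRing g]
    [LieAlgebra K g]
    (t : g →ₗ[K] g →ₗ[K] g)
    (T : g → g → g)
    (hT : ∀ x y : g, T x y = t x y - t y x - ⁅x, y⁆)
    (hflat : ∀ x y z : g, t x (t y z) - t y (t x z) - t ⁅x, y⁆ z = 0)
    (hconstT : ∀ x y z : g, t x (T y z) - T y (t x z) - T (t x y) z = 0)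
    (B : g → g → g)
    (hB : ∀ x y : g, B x y = -T x y) :
    -- `B = −T` is bilinear
    (∀ x x' y : g, B (x + x') y = B x y + B x' y) ∧
    (∀ (c : K) (x y : g), B (c • x) y = c • B x y) ∧
    (∀ x y y' : g, B x (y + y') = B x y + B x y') ∧
    (∀ (c : K) (x y : g), B x (c • y) = c • B x y) ∧
    -- alternating
    (∀ x : g, B x x = 0) ∧
    -- Jacobi identity
    (∀ x y z : g, B x (B y z) + B y (B z x) + B z (B x y) = 0) ∧
    -- (PL1): x ▷ (−T(y,z)) = −T(x ▷ y, z) − T(y, x ▷ z)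
    (∀ x y z : g, t x (B y z) = B (t x y) z + B y (t x z)) ∧
    -- (PL2): (−T(x,y)) ▷ z = a(x,y,z) − a(y,x,z)
    (∀ x y z : g, t (B x y) z =
      (t x (t y z) - t (t x y) z) - (t y (t x z) - t (t y x) z)) := by
  refine ⟨?_, ?_, ?_, ?_, ?_, ?_, ?_, ?_⟩
  · intro x x' y
    simp only [hB, hT, map_add, LinearMap.add_apply, add_lie]
    abel
  · intro c x y
    simp only [hB, hT, map_smul, LinearMap.smul_apply, smul_lie, smul_sub, neg_sub]
  · intro x y y'
    simp only [hB, hT, map_add, LinearMap.add_apply, lie_add]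
    abel
  · intro c x y
    simp only [hB, hT, map_smul, LinearMap.smul_apply, lie_smul, smul_sub, neg_sub]
  · intro x
    simp [hB, hT]
  · intro x y z
    have c1 := hconstT x y z
    have c2 := hconstT y z x
    have c3 := hconstT z x y
    have f1 := hflat x y z
    have f2 := hflat y z x
    have f3 := hflat z x y
    have j : ⁅x, ⁅y, z⁆⁆ + ⁅y, ⁅z, x⁆⁆ + ⁅z, ⁅x, y⁆⁆ = 0 := lie_jacobi x y z
    have s1 : ⁅t x y, z⁆ + ⁅z, t x y⁆ = (0 : g) := by
      rw [← lie_skew z (t x y)]; abel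
    have s2 : ⁅t z x, y⁆ + ⁅y, t z x⁆ = (0 : g) := by
      rw [← lie_skew y (t z x)]; abel
    have s3 : ⁅t y z, x⁆ + ⁅x, t y z⁆ = (0 : g) := by
      rw [← lie_skew x (t y z)]; abel
    simp only [hT] at c1 c2 c3
    simp only [hB, hT]
    simp only [map_sub, map_add, map_neg, LinearMap.sub_apply, LinearMap.add_apply,
      LinearMap.neg_apply, lie_sub, sub_lie, lie_neg, neg_lie, lie_add, add_lie] at c1 c2 c3 f1 f2 f3 j s1 s2 s3 ⊢
    linear_combination (norm := abel1) c1 + c2 + c3 - f1 - f2 - f3 + j - s1 - s2 - s3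
  · intro x y z
    have c := hconstT x y z
    simp only [hT] at c
    simp only [hB, hT]
    simp only [map_sub, map_add, map_neg, LinearMap.sub_apply, LinearMap.add_apply,
      LinearMap.neg_apply, lie_sub, sub_lie, lie_neg, neg_lie, lie_add, add_lie] at c ⊢
    linear_combination (norm := abel1) -c
  · intro x y z
    have f := hflat x y z
    simp only [hB, hT]
    simp only [map_sub, map_add, map_neg, LinearMap.sub_apply, LinearMap.add_apply,
      LinearMap.neg_apply] at f ⊢
    linear_combination (norm := abel1) -f
end

section
/- Let (g, ⟦·,·⟧) be a Lie algebra over a commutative ring K and let ▷ : g × g → g be a K-bilinear product. Define T(x,y) := x ▷ y − y ▷ x − ⟦x,y⟧, R(x,y)z := x ▷ (y ▷ z) − y ▷ (x ▷ z) − ⟦x,y⟧ ▷ z, and ∇T(y,z;x) := x ▷ T(y,z) − T(y, x ▷ z) − T(x ▷ y, z). If R ≡ 0 and ∇T ≡ 0, then the bracket −T satisfies the Jacobi identity; equivalently (first Bianchi identity with R = 0 and ∇T = 0), the cyclic sum T(T(x,y),z) + T(T(y,z),x) + T(T(z,x),y) vanishes for all x, y, z in g. -/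
/-- **Proposition (first Bianchi identity with `R = 0`, `∇T = 0`).**
Let `(g, ⟦·,·⟧)` be a Lie algebra over a commutative ring `K` (the bracket `⁅·,·⁆` below) and
let `▷` be a `K`-bilinear product on `g` (the bilinear map `t`). With
`T(x,y) := x ▷ y − y ▷ x − ⟦x,y⟧`, `R(x,y)z := x ▷ (y ▷ z) − y ▷ (x ▷ z) − ⟦x,y⟧ ▷ z` and
`∇T(y,z;x) := x ▷ T(y,z) − T(y, x ▷ z) − T(x ▷ y, z)`, if `R ≡ 0` and `∇T ≡ 0` then the
bracket `−T` satisfies the Jacobi identity; equivalently, the cyclic sum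
`T(T(x,y),z) + T(T(y,z),x) + T(T(z,x),y)` vanishes. -/
theorem bianchi_neg_torsion_jacobi {K : Type*} [CommRing K] {g : Type*} [LieRing g]
    [LieAlgebra K g]
    (t : g →ₗ[K] g →ₗ[K] g)
    (T : g → g → g)
    (hT : ∀ x y : g, T x y = t x y - t y x - ⁅x, y⁆)
    (hflat : ∀ x y z : g, t x (t y z) - t y (t x z) - t ⁅x, y⁆ z = 0)
    (hconstT : ∀ x y z : g, t x (T y z) - T y (t x z) - T (t x y) z = 0) :
    -- `−T` satisfies the Jacobi identity
    (∀ x y z : g,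
      -T x (-T y z) + -T y (-T z x) + -T z (-T x y) = 0) ∧
    -- equivalently, the cyclic sum of `T(T(·,·),·)` vanishes
    (∀ x y z : g, T (T x y) z + T (T y z) x + T (T z x) y = 0) := by
  have skew : ∀ a b : g, ⁅a, b⁆ + ⁅b, a⁆ = 0 := by
    intro a b
    rw [← lie_skew a b]; abel
  have key : ∀ x y z : g, T (T x y) z + T (T y z) x + T (T z x) y = 0 := by
    intro x y z
    have h1 := hconstT x y z
    have h2 := hconstT y z x
    have h3 := hconstT z x y
    simp only [hT, map_sub, map_add, map_neg, LinearMap.sub_apply, LinearMap.add_apply,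
      LinearMap.neg_apply, sub_lie, lie_sub, add_lie, lie_add, neg_lie, lie_neg]
      at h1 h2 h3 ⊢
    linear_combination (norm := abel1)
      hflat x y z + hflat y z x + hflat z x y - h1 - h2 - h3
      + skew ⁅z, x⁆ y + skew (t y x) z + skew ⁅x, y⁆ z + skew ⁅y, z⁆ x
      + skew x (t z y) + skew (t x z) y - lie_jacobi x y z
  have Tskew : ∀ a b : g, T a b + T b a = 0 := by
    intro a b
    rw [hT, hT, ← lie_skew a b]; abel
  have Tneg : ∀ a b : g, T a (-b) = -T a b := by
    intro a b
    simp only [hT, map_neg, LinearMap.neg_apply, lie_neg, neg_lie]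
    abel
  refine ⟨?_, key⟩
  intro x y z
  simp only [Tneg, neg_neg]
  linear_combination (norm := abel1)
    Tskew (T x y) z + Tskew (T y z) x + Tskew (T z x) y - key x y z
end

section
/- Let (g, [·,·]) be a Lie algebra over a commutative ring K and let π : g → g be a K-linear map satisfying, for all x, y in g, the identity [π x, π y] + π[x,y] = π([π x, y] + [x, π y]). Define x ▷ y := −[x − π x, y]. Then (g, [·,·], ▷) is a post-Lie algebra: ▷ is bilinear and satisfies (PL1) x ▷ [y,z] = [x ▷ y, z] + [y, x ▷ z] and (PL2) [x,y] ▷ z = a(x,y,z) − a(y,x,z) for all x, y, z, where a(x,y,z) := x ▷ (y ▷ z) − (x ▷ y) ▷ z. -/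
/-- **Theorem (Rota–Baxter operators of weight −1 give post-Lie algebras).**
Let `(g, [·,·])` be a Lie algebra over a commutative ring `K` and let `π : g → g` be a
`K`-linear map satisfying `[π x, π y] + π[x,y] = π([π x, y] + [x, π y])` for all `x, y`.
Define `x ▷ y := −[x − π x, y]` (denoted `d` below). Then `(g, [·,·], ▷)` is a post-Lie
algebra: `▷` is bilinear and satisfies (PL1) `x ▷ [y,z] = [x ▷ y, z] + [y, x ▷ z]` and
(PL2) `[x,y] ▷ z = a(x,y,z) − a(y,x,z)`, where `a(x,y,z) := x ▷ (y ▷ z) − (x ▷ y) ▷ z`. -/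
theorem rotaBaxter_postLie {K : Type*} [CommRing K] {g : Type*} [LieRing g] [LieAlgebra K g]
    (π : g →ₗ[K] g)
    (hRB : ∀ x y : g, ⁅π x, π y⁆ + π ⁅x, y⁆ = π (⁅π x, y⁆ + ⁅x, π y⁆))
    (d : g → g → g)
    (hd : ∀ x y : g, d x y = -⁅x - π x, y⁆) :
    -- `▷` is bilinear
    (∀ x x' y : g, d (x + x') y = d x y + d x' y) ∧
    (∀ (c : K) (x y : g), d (c • x) y = c • d x y) ∧
    (∀ x y y' : g, d x (y + y') = d x y + d x y') ∧
    (∀ (c : K) (x y : g), d x (c • y) = c • d x y) ∧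
    -- (PL1)
    (∀ x y z : g, d x ⁅y, z⁆ = ⁅d x y, z⁆ + ⁅y, d x z⁆) ∧
    -- (PL2)
    (∀ x y z : g, d ⁅x, y⁆ z =
      (d x (d y z) - d (d x y) z) - (d y (d x z) - d (d y x) z)) := by

  refine ⟨?_, ?_, ?_, ?_, ?_, ?_⟩
  · intro x x' y; simp [hd, add_sub_add_comm, add_lie]; abel
  · intro c x y; simp [hd, smul_sub, ← smul_lie]
  · intro x y y'; simp [hd, lie_add]; abel
  · intro c x y; simp [hd, lie_smul, smul_sub]
  · intro x y z; simp only [hd, lie_lie, neg_lie, lie_neg, neg_sub]; abel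
  · intro x y z
    have h' : π ⁅π x, y⁆ + π ⁅x, π y⁆ = ⁅π x, π y⁆ + π ⁅x, y⁆ := by
      rw [← map_add, ← hRB]
    have h'' : ⁅π x, π y⁆ = π ⁅π x, y⁆ + π ⁅x, π y⁆ - π ⁅x, y⁆ := by
      rw [h']; abel
    have kπ : π ⁅x - π x, y⁆ - π ⁅y - π y, x⁆ = π ⁅x, y⁆ - ⁅π x, π y⁆ := by
      simp only [map_sub, lie_sub, sub_lie]
      rw [← lie_skew y x, ← lie_skew (π y) x]
      rw [h'']
      simp only [map_neg, map_sub, map_add]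
      abel
    have e1 : d x (d y z) = ⁅x - π x, ⁅y - π y, z⁆⁆ := by
      rw [hd y z, hd]; simp
    have e2 : d (d x y) z = ⁅⁅x - π x, y⁆, z⁆ - ⁅π ⁅x - π x, y⁆, z⁆ := by
      rw [hd x y, hd]; simp only [map_neg, sub_neg_eq_add, neg_add_rev, neg_lie,
        neg_neg, add_lie, neg_lie]
      abel
    have e3 : d y (d x z) = ⁅y - π y, ⁅x - π x, z⁆⁆ := by
      rw [hd x z, hd]; simp
    have e4 : d (d y x) z = ⁅⁅y - π y, x⁆, z⁆ - ⁅π ⁅y - π y, x⁆, z⁆ := by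
      rw [hd y x, hd]; simp only [map_neg, sub_neg_eq_add, neg_add_rev, neg_lie,
        neg_neg, add_lie, neg_lie]
      abel
    rw [hd, e1, e2, e3, e4]
    have key : ⁅π ⁅x - π x, y⁆, z⁆ - ⁅π ⁅y - π y, x⁆, z⁆
        = ⁅π ⁅x, y⁆, z⁆ - ⁅⁅π x, π y⁆, z⁆ := by
      rw [← sub_lie, kπ, sub_lie]
    have jac : ⁅x - π x, ⁅y - π y, z⁆⁆ - ⁅y - π y, ⁅x - π x, z⁆⁆
        = ⁅⁅x - π x, y - π y⁆, z⁆ := by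
      rw [lie_lie]
    -- rearrange goal
    have : (⁅x - π x, ⁅y - π y, z⁆⁆ - (⁅⁅x - π x, y⁆, z⁆ - ⁅π ⁅x - π x, y⁆, z⁆)) -
        (⁅y - π y, ⁅x - π x, z⁆⁆ - (⁅⁅y - π y, x⁆, z⁆ - ⁅π ⁅y - π y, x⁆, z⁆))
        = ⁅⁅x - π x, y - π y⁆, z⁆ - ⁅⁅x - π x, y⁆, z⁆ + ⁅⁅y - π y, x⁆, z⁆
          + (⁅π ⁅x - π x, y⁆, z⁆ - ⁅π ⁅y - π y, x⁆, z⁆) := by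
      rw [← jac]; abel
    rw [this, key]
    simp only [lie_sub, sub_lie]
    rw [← lie_skew y x, ← lie_skew (π y) x]
    simp only [neg_lie, lie_neg]
    abel
end

section
/- Let K be a field, n a finite linearly ordered index type, and consider the Lie algebra gl_n(K) of n×n matrices over K with the commutator bracket [M,N] = MN − NM. Let π₋ be the projection onto the strictly lower triangular part, (π₋ M)_{ij} = M_{ij} if i > j and 0 otherwise, and define M ▷ N := −[π₋ M, N]. Then (gl_n(K), [·,·], ▷) is a post-Lie algebra: ▷ is bilinear and satisfies, for all matrices M, N, P, (PL1) M ▷ [N,P] = [M ▷ N, P] + [N, M ▷ P] and (PL2) [M,N] ▷ P = a(M,N,P) − a(N,M,P), where a(M,N,P) := M ▷ (N ▷ P) − (M ▷ N) ▷ P. -/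
/-!
The operator `R = -π₋` is a Rota–Baxter operator of weight one on `gl_n(K)`, because `gl_n(K)` is
the direct sum of the strictly lower and the upper triangular matrices, both Lie subalgebras.
For any such `R` on a Lie algebra, `x ▷ y = ⁅R x, y⁆` is post-Lie: (PL1) is the Jacobi identity,
and (PL2) is the Jacobi identity for `⁅⁅R x, R y⁆, z⁆` once `⁅R x, R y⁆` is rewritten by the
Rota–Baxter identity.
-/

section RotaBaxter

variable {K L : Type*} [CommRing K] [LieRing L] [LieAlgebra K L]

/-- Rota–Baxter operator of weight one. -/
def IsRotaBaxter (R : L → L) : Prop :=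
  ∀ x y, ⁅R x, R y⁆ = R (⁅R x, y⁆ + ⁅x, R y⁆ + ⁅x, y⁆)

/-- `tri x y` stands for the post-Lie product `x ▷ y`. -/
structure IsPostLie (tri : L → L → L) : Prop where
  tri_lie : ∀ x y z, tri x ⁅y, z⁆ = ⁅tri x y, z⁆ + ⁅y, tri x z⁆
  lie_tri : ∀ x y z,
    tri ⁅x, y⁆ z = (tri x (tri y z) - tri (tri x y) z) - (tri y (tri x z) - tri (tri y x) z)

/-- The hypotheses say that `P` is the projection onto a Lie subalgebra along a complementary
Lie subalgebra. -/
theorem isRotaBaxter_neg_of_isCompl_subalgebras (P : L →ₗ[K] L)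
    (hP : ∀ x y, P ⁅P x, P y⁆ = ⁅P x, P y⁆) (hQ : ∀ x y, P ⁅x - P x, y - P y⁆ = 0) :
    IsRotaBaxter ⇑(-P) := by
  intro x y
  have h := hQ x y
  simp only [sub_lie, lie_sub, map_sub, hP] at h
  simp only [LinearMap.neg_apply, neg_lie, lie_neg, neg_neg, map_add, map_neg]
  rw [← sub_eq_zero, ← h]
  abel

theorem IsRotaBaxter.isPostLie {R : L →ₗ[K] L} (hR : IsRotaBaxter ⇑R) :
    IsPostLie fun x y => ⁅R x, y⁆ where
  tri_lie x y z := leibniz_lie (R x) y z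
  lie_tri x y z := by
    have hxy : R ⁅x, y⁆ = ⁅R x, R y⁆ - R ⁅R x, y⁆ - R ⁅x, R y⁆ := by
      rw [hR, map_add, map_add]
      abel
    have hyx : R ⁅R y, x⁆ = -R ⁅x, R y⁆ := by rw [← lie_skew, map_neg]
    rw [hxy, hyx, sub_lie, sub_lie, lie_lie, neg_lie]
    abel

end RotaBaxter

namespace Matrix

attribute [local instance] LieRing.ofAssociativeRing

variable {R n : Type*} [CommRing R] [LinearOrder n]

def strictLowerProj : Matrix n n R →ₗ[R] Matrix n n R where
  toFun M := of fun i j => if j < i then M i j else 0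
  map_add' M N := by ext i j; by_cases h : j < i <;> simp [h]
  map_smul' c M := by ext i j; by_cases h : j < i <;> simp [h]

@[simp]
theorem strictLowerProj_apply (M : Matrix n n R) (i j : n) :
    strictLowerProj M i j = if j < i then M i j else 0 :=
  rfl

theorem isUpperTriangular_sub_strictLowerProj (M : Matrix n n R) :
    (M - strictLowerProj M).IsUpperTriangular := fun i j h => by simp [show j < i from h]

theorem strictLowerProj_eq_zero_of_isUpperTriangular {M : Matrix n n R}
    (hM : M.IsUpperTriangular) : strictLowerProj M = 0 := by
  ext i j
  simpa using fun h : j < i => hM h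

variable [Fintype n]

theorem strictLowerProj_mul_strictLowerProj (A B : Matrix n n R) :
    strictLowerProj (strictLowerProj A * strictLowerProj B) =
      strictLowerProj A * strictLowerProj B := by
  ext i j
  rw [strictLowerProj_apply, ite_eq_left_iff]
  intro hji
  refine (Finset.sum_eq_zero fun k _ => ?_).symm
  by_cases hki : k < i
  · simp [show ¬j < k from fun hjk => hji (hjk.trans hki)]
  · simp [hki]

theorem strictLowerProj_lie_strictLowerProj (A B : Matrix n n R) :
    strictLowerProj ⁅strictLowerProj A, strictLowerProj B⁆ =
      ⁅strictLowerProj A, strictLowerProj B⁆ := by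
  simp only [Ring.lie_def, map_sub, strictLowerProj_mul_strictLowerProj]

theorem strictLowerProj_lie_sub_strictLowerProj (A B : Matrix n n R) :
    strictLowerProj ⁅A - strictLowerProj A, B - strictLowerProj B⁆ = 0 := by
  have hA := isUpperTriangular_sub_strictLowerProj A
  have hB := isUpperTriangular_sub_strictLowerProj B
  apply strictLowerProj_eq_zero_of_isUpperTriangular
  rw [Ring.lie_def]
  exact (hA.mul hB).sub (hB.mul hA)

theorem isRotaBaxter_neg_strictLowerProj [DecidableEq n] :
    IsRotaBaxter ⇑(-strictLowerProj (R := R) (n := n)) :=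
  isRotaBaxter_neg_of_isCompl_subalgebras _ strictLowerProj_lie_strictLowerProj
    strictLowerProj_lie_sub_strictLowerProj

end Matrix

open Matrix in
theorem lu_postLie_general {K : Type*} [Field K] {n : Type*} [Fintype n] [LinearOrder n]
    (π : Matrix n n K → Matrix n n K)
    (hπ : ∀ (M : Matrix n n K) (i j : n), π M i j = if j < i then M i j else 0)
    (d : Matrix n n K → Matrix n n K → Matrix n n K)
    (hd : ∀ M N : Matrix n n K, d M N = -⁅π M, N⁆) :
    -- `▷` is bilinear
    (∀ M M' N : Matrix n n K, d (M + M') N = d M N + d M' N) ∧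
    (∀ (c : K) (M N : Matrix n n K), d (c • M) N = c • d M N) ∧
    (∀ M N N' : Matrix n n K, d M (N + N') = d M N + d M N') ∧
    (∀ (c : K) (M N : Matrix n n K), d M (c • N) = c • d M N) ∧
    -- (PL1)
    (∀ M N P : Matrix n n K, d M ⁅N, P⁆ = ⁅d M N, P⁆ + ⁅N, d M P⁆) ∧
    -- (PL2)
    (∀ M N P : Matrix n n K, d ⁅M, N⁆ P =
      (d M (d N P) - d (d M N) P) - (d N (d M P) - d (d N M) P)) := by
  classical
  let _ := LieRing.ofAssociativeRing (A := Matrix n n K)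
  have hπ_eq : π = strictLowerProj := funext fun M => ext (hπ M)
  obtain rfl : d = fun M N => ⁅(-strictLowerProj (R := K) (n := n)) M, N⁆ := by
    funext M N
    simp [hd, hπ_eq]
  obtain ⟨hPL1, hPL2⟩ := (isRotaBaxter_neg_strictLowerProj (R := K) (n := n)).isPostLie
  exact ⟨fun M M' N => by simp only [map_add, add_lie],
    fun c M N => by simp only [map_smul, smul_lie], fun M N N' => lie_add _ N N',
    fun c M N => lie_smul c _ N, hPL1, hPL2⟩

/-- **Theorem (the post-Lie algebra of the LU factorization).**
Let `K` be a field, `n` a finite linearly ordered index type, and consider the Lie algebra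
`gl_n(K)` of `n × n` matrices over `K` with the commutator bracket `[M,N] = MN − NM`. Let
`π₋` be the projection onto the strictly lower triangular part, and define
`M ▷ N := −[π₋ M, N]` (denoted `d` below). Then `(gl_n(K), [·,·], ▷)` is a post-Lie algebra:
`▷` is bilinear and satisfies (PL1) `M ▷ [N,P] = [M ▷ N, P] + [N, M ▷ P]` and
(PL2) `[M,N] ▷ P = a(M,N,P) − a(N,M,P)`, where `a(M,N,P) := M ▷ (N ▷ P) − (M ▷ N) ▷ P`. -/
theorem lu_postLie {K : Type*} [Field K] {n : Type*} [Fintype n] [DecidableEq n] [LinearOrder n]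
    (π : Matrix n n K → Matrix n n K)
    (hπ : ∀ (M : Matrix n n K) (i j : n), π M i j = if j < i then M i j else 0)
    (d : Matrix n n K → Matrix n n K → Matrix n n K)
    (hd : ∀ M N : Matrix n n K, d M N = -⁅π M, N⁆) :
    -- `▷` is bilinear
    (∀ M M' N : Matrix n n K, d (M + M') N = d M N + d M' N) ∧
    (∀ (c : K) (M N : Matrix n n K), d (c • M) N = c • d M N) ∧
    (∀ M N N' : Matrix n n K, d M (N + N') = d M N + d M N') ∧
    (∀ (c : K) (M N : Matrix n n K), d M (c • N) = c • d M N) ∧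
    -- (PL1)
    (∀ M N P : Matrix n n K, d M ⁅N, P⁆ = ⁅d M N, P⁆ + ⁅N, d M P⁆) ∧
    -- (PL2)
    (∀ M N P : Matrix n n K, d ⁅M, N⁆ P =
      (d M (d N P) - d (d M N) P) - (d N (d M P) - d (d N M) P)) :=
  lu_postLie_general π hπ d hd
end

section
/- Let n be a finite linearly ordered index type and consider the Lie algebra of real n×n matrices with the commutator bracket [M,N] = MN − NM. Let L(M) denote the strictly lower triangular part of M (L(M)_{ij} = M_{ij} if i > j, else 0), and define the projection π(M) := L(M) − L(M)ᵀ, which is the projection onto the skew-symmetric matrices along the upper triangular matrices. Then for all real matrices M, N: [π M, π N] + π[M,N] = π([π M, N] + [M, π N]). -/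
/-!
If `P` is the projection of a Lie algebra onto a Lie subalgebra `A` along a complementary Lie
subalgebra `B`, then
`⁅P x, y⁆ + ⁅x, P y⁆ = ⁅x, y⁆ + ⁅P x, P y⁆ - ⁅x - P x, y - P y⁆`,
and applying `P` fixes the middle bracket (it lies in `A`) and kills the last one (it lies in `B`).
-/

section RotaBaxter

variable {R L : Type*} [CommRing R] [LieRing L] [LieAlgebra R L]

theorem LinearMap.IsProj.rotaBaxter {A B : LieSubalgebra R L} {P : L →ₗ[R] L}
    (hP : LinearMap.IsProj A.toSubmodule P) (hker : LinearMap.ker P = B.toSubmodule) (x y : L) :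
    ⁅P x, P y⁆ + P ⁅x, y⁆ = P (⁅P x, y⁆ + ⁅x, P y⁆) := by
  have hsub : ∀ z, z - P z ∈ B := fun z => by
    rw [← LieSubalgebra.mem_toSubmodule, ← hker, LinearMap.mem_ker, map_sub,
      hP.map_id _ (hP.map_mem z), sub_self]
  have hA : P ⁅P x, P y⁆ = ⁅P x, P y⁆ :=
    hP.map_id _ (A.lie_mem (hP.map_mem x) (hP.map_mem y))
  have hB : P ⁅x - P x, y - P y⁆ = 0 := by
    rw [← LinearMap.mem_ker, hker]
    exact B.lie_mem (hsub x) (hsub y)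
  have expand : ⁅P x, y⁆ + ⁅x, P y⁆ = ⁅x, y⁆ + ⁅P x, P y⁆ - ⁅x - P x, y - P y⁆ := by
    simp only [sub_lie, lie_sub]
    abel
  rw [expand, map_sub, map_add, hA, hB]
  abel

end RotaBaxter

namespace Matrix

variable {n R : Type*} [CommRing R]

-- Matrices carry the commutator bracket globally, but their Lie ring structure is only local.
attribute [local instance] LieRing.ofAssociativeRing LieAlgebra.ofAssociativeAlgebra

section LieSubalgebras

variable [Fintype n] [DecidableEq n]

theorem mem_skewAdjointMatricesLieSubalgebra_one {A : Matrix n n R} :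
    A ∈ skewAdjointMatricesLieSubalgebra (1 : Matrix n n R) ↔ Aᵀ = -A := by
  simp [Matrix.IsSkewAdjoint, Matrix.IsAdjointPair]

variable (R) in
def blockTriangularLieSubalgebra {α : Type*} [LinearOrder α] (b : n → α) :
    LieSubalgebra R (Matrix n n R) where
  carrier := {M | M.BlockTriangular b}
  add_mem' := BlockTriangular.add
  zero_mem' := blockTriangular_zero
  smul_mem' c _ hM i j hji := by simp [hM hji]
  lie_mem' {M N} (hM : M.BlockTriangular b) (hN : N.BlockTriangular b) :=
    (hM.mul hN).sub (hN.mul hM)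

theorem mem_blockTriangularLieSubalgebra {α : Type*} [LinearOrder α] {b : n → α}
    {M : Matrix n n R} :
    M ∈ blockTriangularLieSubalgebra R b ↔ M.BlockTriangular b :=
  Iff.rfl

end LieSubalgebras

variable [LinearOrder n]

variable (n R) in
def qrProjection : Matrix n n R →ₗ[R] Matrix n n R where
  toFun M := of fun i j => (if j < i then M i j else 0) - (if i < j then M j i else 0)
  map_add' M N := by
    ext i j
    simp only [of_apply, add_apply]
    split_ifs <;> ring
  map_smul' c M := by
    ext i j
    simp only [of_apply, smul_apply, smul_eq_mul, RingHom.id_apply]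
    split_ifs <;> ring

theorem qrProjection_apply (M : Matrix n n R) (i j : n) :
    qrProjection n R M i j = (if j < i then M i j else 0) - (if i < j then M j i else 0) :=
  rfl

variable [Fintype n] [DecidableEq n]

theorem isProj_qrProjection [IsAddTorsionFree R] :
    LinearMap.IsProj (skewAdjointMatricesLieSubalgebra (1 : Matrix n n R)).toSubmodule
      (qrProjection n R) where
  map_mem M := by
    rw [LieSubalgebra.mem_toSubmodule, mem_skewAdjointMatricesLieSubalgebra_one]
    ext i j
    simp only [transpose_apply, neg_apply, qrProjection_apply]
    split_ifs <;> ring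
  map_id A hA := by
    rw [LieSubalgebra.mem_toSubmodule, mem_skewAdjointMatricesLieSubalgebra_one] at hA
    have hskew : ∀ i j, A j i = -A i j := fun i j => congrFun (congrFun hA i) j
    ext i j
    rw [qrProjection_apply]
    rcases lt_trichotomy i j with hij | rfl | hij
    · simp [hij, hij.not_gt, hskew i j]
    · simpa using (self_eq_neg.mp (hskew i i)).symm
    · simp [hij, hij.not_gt]

theorem ker_qrProjection :
    LinearMap.ker (qrProjection n R) = (blockTriangularLieSubalgebra R id).toSubmodule := by
  ext M
  simp only [LinearMap.mem_ker, LieSubalgebra.mem_toSubmodule, mem_blockTriangularLieSubalgebra]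
  constructor
  · intro h i j (hji : j < i)
    simpa [qrProjection_apply, hji, hji.not_gt] using congrFun (congrFun h i) j
  · intro hM
    ext i j
    rcases lt_trichotomy i j with hij | rfl | hij
    · simp [qrProjection_apply, hij, hij.not_gt, hM hij]
    · simp [qrProjection_apply]
    · simp [qrProjection_apply, hij, hij.not_gt, hM hij]

theorem qrProjection_rotaBaxter [IsAddTorsionFree R] (M N : Matrix n n R) :
    ⁅qrProjection n R M, qrProjection n R N⁆ + qrProjection n R ⁅M, N⁆ =
      qrProjection n R (⁅qrProjection n R M, N⁆ + ⁅M, qrProjection n R N⁆) :=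
  isProj_qrProjection.rotaBaxter ker_qrProjection M N

end Matrix

/-- **Proposition (the QR projection is Rota–Baxter of weight −1).**
Let `n` be a finite linearly ordered index type and consider the Lie algebra of real `n × n`
matrices with the commutator bracket `[M,N] = MN − NM`. Let `L M` denote the strictly lower
triangular part of `M`, and define the projection `π M := L M − (L M)ᵀ`, which is the
projection onto the skew-symmetric matrices along the upper triangular matrices. Then for all
real matrices `M, N`: `[π M, π N] + π[M,N] = π([π M, N] + [M, π N])`. -/
theorem qr_projection_rotaBaxter {n : Type*} [Fintype n] [DecidableEq n] [LinearOrder n]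
    (L : Matrix n n ℝ → Matrix n n ℝ)
    (hL : ∀ (M : Matrix n n ℝ) (i j : n), L M i j = if j < i then M i j else 0)
    (π : Matrix n n ℝ → Matrix n n ℝ)
    (hπ : ∀ M : Matrix n n ℝ, π M = L M - (L M).transpose) :
    ∀ M N : Matrix n n ℝ, ⁅π M, π N⁆ + π ⁅M, N⁆ = π (⁅π M, N⁆ + ⁅M, π N⁆) := by
  have hπ_eq : π = Matrix.qrProjection n ℝ := by
    ext M i j
    simp [hπ, hL, Matrix.qrProjection_apply]
  subst hπ_eq
  exact Matrix.qrProjection_rotaBaxter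
end
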